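/- Let f be a homeomorphism of a compact metric space whose non-wandering set is a finite disjoint union of closed invariant sets Λ₁, …, Λ_m. If x is a point whose ω-limit set is contained in the union of the Λ_i, then there is a unique index i such that ω(x) ⊆ Λ_i. -/

import Mathlib

/-!
Separate `Λ i` from the other basic sets by an open set `U` whose closure avoids them. If the
orbit of `x` accumulated both on `Λ i` and elsewhere, it would leave `U` infinitely often, and a
limit `w` of the points just before leaving lies in `ω(x) ∩ closure U ⊆ Λ i`. Then `f w` is
both in `Λ i ⊆ U` (invariance) and in the closure of `Uᶜ`, which is impossible since `U` is open.
-/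

open Filter Topology Set

/-- The ω-limit set of `x` under a homeomorphism `f`. -/
def omegaSet {X : Type*} [TopologicalSpace X] (f : X ≃ₜ X) (x : X) : Set X :=
  {y | ∃ φ : ℕ → ℕ, StrictMono φ ∧ Tendsto (fun n => (⇑f)^[φ n] x) atTop (𝓝 y)}

/-- The non-wandering set of a homeomorphism `f`. -/
def nonWanderingSet {X : Type*} [TopologicalSpace X] (f : X ≃ₜ X) : Set X :=
  {p | ∀ U ∈ 𝓝 p, ∃ n : ℕ, 1 ≤ n ∧ ((⇑f)^[n] '' U ∩ U).Nonempty}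

theorem Nat.frequently_and_not_succ {p : ℕ → Prop} (hp : ∃ᶠ n in atTop, p n)
    (hnp : ∃ᶠ n in atTop, ¬ p n) : ∃ᶠ n in atTop, p n ∧ ¬ p (n + 1) := by
  by_contra! h
  obtain ⟨N, hN⟩ := eventually_atTop.mp h
  obtain ⟨a, haN, ha⟩ := frequently_atTop.mp hp N
  obtain ⟨b, hab, hb⟩ := frequently_atTop.mp hnp a
  exact hb (Nat.le_induction ha (fun k hk => hN k (haN.trans hk)) b hab)

section OmegaSet

variable {X : Type*} [TopologicalSpace X] {f : X ≃ₜ X} {x : X}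

theorem frequently_iterate_mem_of_mem_omegaSet {y : X} (hy : y ∈ omegaSet f x) {U : Set X}
    (hU : U ∈ 𝓝 y) : ∃ᶠ n in atTop, f^[n] x ∈ U := by
  obtain ⟨φ, hφ, hlim⟩ := hy
  exact hφ.tendsto_atTop.frequently (hlim.eventually hU).frequently

variable [SeqCompactSpace X]

theorem omegaSet_nonempty (f : X ≃ₜ X) (x : X) : (omegaSet f x).Nonempty :=
  let ⟨y, φ, hφ, hlim⟩ := SeqCompactSpace.tendsto_subseq fun n => f^[n] x
  ⟨y, φ, hφ, hlim⟩

theorem exists_mem_omegaSet_of_frequently {s t : Set X}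
    (h : ∃ᶠ n in atTop, f^[n] x ∈ s ∧ f^[n + 1] x ∈ t) :
    ∃ y ∈ omegaSet f x, y ∈ closure s ∧ f y ∈ closure t := by
  obtain ⟨ψ, hψ, hst⟩ := extraction_of_frequently_atTop h
  obtain ⟨y, σ, hσ, hlim⟩ := SeqCompactSpace.tendsto_subseq fun n => f^[ψ n] x
  have hlim_succ : Tendsto (fun n => f^[ψ (σ n) + 1] x) atTop (𝓝 (f y)) := by
    simpa only [Function.iterate_succ_apply', Function.comp_def] using
      (f.continuous.tendsto y).comp hlim
  exact ⟨y, ⟨ψ ∘ σ, hψ.comp hσ, hlim⟩,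
    mem_closure_of_tendsto hlim (.of_forall fun n => (hst (σ n)).1),
    mem_closure_of_tendsto hlim_succ (.of_forall fun n => (hst (σ n)).2)⟩

theorem omegaSet_subset_of_subset_union [NormalSpace X] {A B : Set X} (hA : IsClosed A)
    (hB : IsClosed B) (hAB : Disjoint A B) (hfA : MapsTo f A A)
    (hω : omegaSet f x ⊆ A ∪ B) (hmeet : (omegaSet f x ∩ A).Nonempty) :
    omegaSet f x ⊆ A := by
  obtain ⟨U, hUo, hAU, hUB⟩ :=
    normal_exists_closure_subset hA hB.isOpen_compl hAB.subset_compl_right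
  obtain ⟨y, hyω, hyA⟩ := hmeet
  intro z hz
  by_contra hzA
  have hzU : z ∉ closure U := fun h => hUB h ((hω hz).resolve_left hzA)
  have hin : ∃ᶠ n in atTop, f^[n] x ∈ U :=
    frequently_iterate_mem_of_mem_omegaSet hyω (hUo.mem_nhds (hAU hyA))
  have hout : ∃ᶠ n in atTop, f^[n] x ∉ U :=
    (frequently_iterate_mem_of_mem_omegaSet hz (isClosed_closure.isOpen_compl.mem_nhds hzU)).mono
      fun n hn hnU => hn (subset_closure hnU)
  obtain ⟨w, hwω, hwU, hfwU⟩ :=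
    exists_mem_omegaSet_of_frequently (t := Uᶜ) (Nat.frequently_and_not_succ hin hout)
  have hwA : w ∈ A := (hω hwω).resolve_right (hUB hwU)
  rw [closure_compl, hUo.interior_eq] at hfwU
  exact hfwU (hAU (hfA hwA))

end OmegaSet

theorem omegaSet_subset_unique_basic_set_general {X : Type*} [MetricSpace X] [CompactSpace X]
    (f : X ≃ₜ X) (m : ℕ) (Λ : Fin m → Set X)
    (hclosed : ∀ i, IsClosed (Λ i)) (hinv : ∀ i, f '' Λ i = Λ i)
    (hdisj : Pairwise (Function.onFun Disjoint Λ))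
    (x : X) (hx : omegaSet f x ⊆ ⋃ i, Λ i) :
    ∃! i : Fin m, omegaSet f x ⊆ Λ i := by
  obtain ⟨y, hy⟩ := omegaSet_nonempty f x
  obtain ⟨i, hi⟩ := mem_iUnion.mp (hx hy)
  have hsub : omegaSet f x ⊆ Λ i := by
    refine omegaSet_subset_of_subset_union (B := ⋃ (j) (_ : j ≠ i), Λ j) (hclosed i)
      (isClosed_iUnion_of_finite fun j => isClosed_iUnion_of_finite fun _ => hclosed j)
      (disjoint_iUnion₂_right.mpr fun j hj => hdisj hj.symm)
      (fun z hz => hinv i ▸ mem_image_of_mem f hz) (fun z hz => ?_) ⟨y, hy, hi⟩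
    obtain ⟨j, hj⟩ := mem_iUnion.mp (hx hz)
    by_cases hji : j = i
    · exact .inl (hji ▸ hj)
    · exact .inr (mem_biUnion hji hj)
  exact ⟨i, hsub, fun j hj => by_contra fun hji =>
    disjoint_left.mp (hdisj hji) (hj hy) (hsub hy)⟩

/-- Let `f` be a homeomorphism of a compact metric space whose non-wandering set is
a finite disjoint union of closed invariant sets `Λ₁, …, Λ_m`. If the ω-limit set
of `x` is contained in the union of the `Λ i`, then there is a unique index `i`
with `ω(x) ⊆ Λ i`. -/
theorem omegaSet_subset_unique_basic_set {X : Type*} [MetricSpace X] [CompactSpace X]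
    (f : X ≃ₜ X) (m : ℕ) (Λ : Fin m → Set X)
    (hclosed : ∀ i, IsClosed (Λ i)) (hinv : ∀ i, f '' Λ i = Λ i)
    (hdisj : Pairwise (Function.onFun Disjoint Λ))
    (hNW : nonWanderingSet f = ⋃ i, Λ i)
    (x : X) (hx : omegaSet f x ⊆ ⋃ i, Λ i) :
    ∃! i : Fin m, omegaSet f x ⊆ Λ i :=
  omegaSet_subset_unique_basic_set_general f m Λ hclosed hinv hdisj x hx
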